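/- Let κ be an infinite cardinal and F ⊆ 2^κ with sdim(F) < κ. Then F is nowhere dense in 2^κ with the bounded-support product topology: for every s ∈ 2^{<κ} there is t ∈ 2^{<κ} extending s such that [t] ∩ F = ∅. -/

import Mathlib

universe u

open Cardinal

/-- `F` shatters `A` if every function `A → Bool` extends to an element of `F`. -/
def Shatters {X : Type u} (F : Set (X → Bool)) (A : Set X) : Prop :=
  ∀ g : X → Bool, ∃ f ∈ F, ∀ a ∈ A, f a = g a

/-- The string dimension of `F`: the least cardinal `δ` such that `F` shatters no
set of cardinality `δ`. -/
noncomputable def sdim {X : Type u} (F : Set (X → Bool)) : Cardinal.{u} :=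
  sInf {δ : Cardinal.{u} | ∀ A : Set X, #A = δ → ¬ Shatters F A}

/-! `sdim F` is itself a size of non-shattered sets, so it suffices to find a set of that size
inside a bounded interval `[a, b)` above the given string and to let `t` copy, on it, a pattern
that no element of `F` realises. Such an interval exists because `a + sdim F < κ` as ordinals. -/

theorem not_shatters_of_mk_eq_sdim {X : Type u} (F : Set (X → Bool)) (A : Set X)
    (hA : #A = sdim F) : ¬ Shatters F A := by
  have hne : {δ : Cardinal.{u} | ∀ A : Set X, #A = δ → ¬ Shatters F A}.Nonempty :=
    ⟨Order.succ #X, fun B hB _ => (Order.lt_succ #X).not_ge (hB ▸ mk_set_le B)⟩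
  exact csInf_mem hne A hA

open Ordinal in
theorem exists_le_mk_Ico {κ δ : Cardinal.{u}} (hκ : ℵ₀ ≤ κ) (hδ : δ < κ) (a : κ.ord.ToType) :
    ∃ b, a ≤ b ∧ δ ≤ #(Set.Ico a b) := by
  set α : Ordinal := (ToType.toOrd a).1
  have hαδ : α + δ.ord < κ.ord := by
    rw [lt_ord, card_add, card_ord]
    exact add_lt_of_lt hκ (lt_ord.mp (ToType.toOrd a).2) hδ
  let shift : δ.ord.ToType → κ.ord.ToType := fun o =>
    ToType.mk ⟨α + (ToType.toOrd o).1,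
      Set.mem_Iio.mpr ((add_lt_add_right (ToType.toOrd o).2 α).trans hαδ)⟩
  have hshift : StrictMono shift := fun o₁ o₂ h => by
    simpa [shift] using ToType.mk.symm.strictMono h
  let b : κ.ord.ToType := ToType.mk ⟨α + δ.ord, hαδ⟩
  have hle : ∀ {o : Ordinal} (ho : α + o < κ.ord), a ≤ ToType.mk ⟨α + o, ho⟩ := fun ho => by
    rw [← ToType.mk.symm.le_iff_le, OrderIso.symm_apply_apply, ← Subtype.coe_le_coe]
    exact le_self_add
  refine ⟨b, hle hαδ, ?_⟩
  rw [← mk_ord_toType δ]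
  refine mk_le_of_injective (f := fun o => ⟨shift o, hle _, ?_⟩) fun o₁ o₂ h =>
    hshift.injective (congrArg Subtype.val h)
  rw [← ToType.mk.symm.lt_iff_lt]
  simp only [OrderIso.symm_apply_apply, ← Subtype.coe_lt_coe, add_lt_add_iff_left, shift, b]
  exact (ToType.toOrd o).2

/-- If `sdim F < κ` then `F` is nowhere dense in `2^κ` with the bounded-support product
topology: every basic open set `[s]` (a string `s` of length `a < κ`) contains a basic
open set `[t]` (a string `t` of length `b ≥ a` extending `s`) disjoint from `F`. -/
theorem stmt4 (κ : Cardinal.{u}) (hκ : ℵ₀ ≤ κ)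
    (F : Set ((Cardinal.ord κ).ToType → Bool))
    (h : sdim F < κ) :
    ∀ (a : (Cardinal.ord κ).ToType) (s : (Cardinal.ord κ).ToType → Bool),
      ∃ b, a ≤ b ∧ ∃ t : (Cardinal.ord κ).ToType → Bool,
        (∀ c < a, t c = s c) ∧ ∀ x ∈ F, ∃ c < b, x c ≠ t c := by
  classical
  intro a s
  obtain ⟨b, hab, hIco⟩ := exists_le_mk_Ico hκ h a
  obtain ⟨A, hAIco, hA⟩ := le_mk_iff_exists_subset.mp hIco
  obtain ⟨g, hg⟩ : ∃ g : (Cardinal.ord κ).ToType → Bool, ∀ x ∈ F, ∃ c ∈ A, x c ≠ g c := by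
    simpa [Shatters] using not_shatters_of_mk_eq_sdim F A hA
  refine ⟨b, hab, A.piecewise g s, fun c hc => ?_, fun x hx => ?_⟩
  · exact A.piecewise_eq_of_notMem _ _ fun hcA => (hAIco hcA).1.not_gt hc
  · obtain ⟨c, hcA, hne⟩ := hg x hx
    exact ⟨c, (hAIco hcA).2, by rwa [A.piecewise_eq_of_mem _ _ hcA]⟩
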